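/- Let K be a category with the joint embedding property. Then every inductive sequence in K satisfying condition (A) is a Fraïssé sequence. -/
import Mathlib


open CategoryTheory

universe w v u

/-- The index set of ordinals below `δ`, used to index inductive sequences of length `δ`. -/
abbrev Idx (δ : Ordinal.{w}) : Type (w + 1) := {ξ : Ordinal.{w} // ξ < δ}

/-- Condition (U): the sequence is cofinal in `C`. -/
def IsCofinalSeq {C : Type u} [Category.{v} C] {I : Type*} [Preorder I] (F : I ⥤ C) : Prop :=
  ∀ x : C, ∃ ξ : I, Nonempty (x ⟶ F.obj ξ)

/-- Condition (A): the amalgamation property of a sequence. -/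
def SeqAmalg {C : Type u} [Category.{v} C] {I : Type*} [Preorder I] (F : I ⥤ C) : Prop :=
  ∀ (ξ : I) (y : C) (f : F.obj ξ ⟶ y),
    ∃ (η : I) (h : ξ ≤ η) (g : y ⟶ F.obj η), f ≫ g = F.map (homOfLE h)

/-- A Fraïssé sequence satisfies (U) and (A). -/
def IsFraisseSeq {C : Type u} [Category.{v} C] {I : Type*} [Preorder I] (F : I ⥤ C) : Prop :=
  IsCofinalSeq F ∧ SeqAmalg F

/-- The joint embedding property of a category. -/
def JointEmbProp (C : Type u) [Category.{v} C] : Prop :=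
  ∀ a b : C, ∃ d : C, Nonempty (a ⟶ d) ∧ Nonempty (b ⟶ d)

/-- in a category with the joint embedding property, every (nonempty) inductive
sequence satisfying condition (A) is a Fraïssé sequence. -/
theorem isFraisseSeq_of_seqAmalg_of_jointEmb
    {C : Type u} [Category.{v} C] (hC : JointEmbProp C)
    (δ : Ordinal.{w}) (hδ : δ ≠ 0) (u : Idx δ ⥤ C) (hu : SeqAmalg u) :
    IsFraisseSeq u := by
  refine ⟨?_, hu⟩
  intro x
  have h0 : (0 : Ordinal.{w}) < δ := pos_iff_ne_zero.mpr hδ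
  obtain ⟨d, ⟨fx⟩, ⟨f0⟩⟩ := hC x (u.obj ⟨0, h0⟩)
  obtain ⟨η, h, g, -⟩ := hu ⟨0, h0⟩ d f0
  exact ⟨η, ⟨fx ≫ g⟩⟩
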